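/- arXiv:2011.01547 — 4 statements merged into one kernel-verified Lean document; each statement's English description precedes it below -/
import Mathlib

section
/- Let L be a frame. If L is subfit (whenever a ∧ x ≰ b there is y with x ∨ y = 1 and a ≰ y ∨ b), then for every x ∈ L, Δ(x) = ⋂ {∇(y) : x ∨ y = 1}. -/
variable {L : Type*} [Order.Frame L]

/-- The closed congruence `∇(a)`. -/
def nabla (a : L) : Set (L × L) := {p | p.1 ⊔ a = p.2 ⊔ a}

/-- The open congruence `Δ(a)`. -/
def delta (a : L) : Set (L × L) := {p | p.1 ⊓ a = p.2 ⊓ a}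

/-- A frame congruence: an equivalence relation on `L` closed under binary meets
and arbitrary joins (a subframe of `L × L`). -/
def IsFrameCong (C : Set (L × L)) : Prop :=
  (∀ x : L, (x, x) ∈ C) ∧
  (∀ x y : L, (x, y) ∈ C → (y, x) ∈ C) ∧
  (∀ x y z : L, (x, y) ∈ C → (y, z) ∈ C → (x, z) ∈ C) ∧
  (∀ x₁ y₁ x₂ y₂ : L, (x₁, y₁) ∈ C → (x₂, y₂) ∈ C → (x₁ ⊓ x₂, y₁ ⊓ y₂) ∈ C) ∧
  (∀ s : Set (L × L), s ⊆ C → (sSup (Prod.fst '' s), sSup (Prod.snd '' s)) ∈ C)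

/-- The congruence generated by a relation: the intersection of all frame
congruences containing it (the join in the assembly when applied to unions). -/
def congGen (R : Set (L × L)) : Set (L × L) :=
  ⋂₀ {C : Set (L × L) | IsFrameCong C ∧ R ⊆ C}

theorem stmt_9
    (hsub : ∀ a b x : L, ¬ a ⊓ x ≤ b → ∃ y : L, x ⊔ y = ⊤ ∧ ¬ a ≤ y ⊔ b) :
    ∀ x : L, delta x = ⋂ y ∈ {y : L | x ⊔ y = ⊤}, nabla y := by
  intro x
  ext ⟨u, v⟩
  simp only [delta, nabla, Set.mem_setOf_eq, Set.mem_iInter]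
  constructor
  · intro h y hy
    have : (u ⊔ y) ⊓ (x ⊔ y) = (v ⊔ y) ⊓ (x ⊔ y) := by
      rw [← sup_inf_right, ← sup_inf_right, h]
    simpa [hy] using this
  · intro h
    have key : ∀ a b : L, (∀ y, x ⊔ y = ⊤ → a ⊔ y = b ⊔ y) → a ⊓ x ≤ b := by
      intro a b hab
      by_contra hle
      obtain ⟨y, hy, hna⟩ := hsub a b x hle
      exact hna (le_trans (le_sup_left.trans (hab y hy).le) (by rw [sup_comm]))
      -- a ≤ a ⊔ y = b ⊔ y = y ⊔ b
    have h1 : u ⊓ x ≤ v := key u v h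
    have h2 : v ⊓ x ≤ u := key v u (fun y hy => (h y hy).symm)
    exact le_antisymm (le_inf h1 inf_le_right) (le_inf h2 inf_le_right)
end

section
/- Let L be a frame. If for every x ∈ L we have Δ(x) = ⋂ {∇(y) : x ∨ y = 1}, then L is subfit: whenever a ∧ x ≰ b there exists y with x ∨ y = 1 and a ≰ y ∨ b. -/
variable {L : Type*} [Order.Frame L]

theorem stmt_10
    (h : ∀ x : L, delta x = ⋂ y ∈ {y : L | x ⊔ y = ⊤}, nabla y) :
    ∀ a b x : L, ¬ a ⊓ x ≤ b → ∃ y : L, x ⊔ y = ⊤ ∧ ¬ a ≤ y ⊔ b := by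
  intro a b x hab
  by_contra hcon
  push_neg at hcon
  apply hab
  have hmem : ((a ⊔ b, b) : L × L) ∈ delta x := by
    rw [h x]
    simp only [Set.mem_iInter]
    intro y hy
    have := hcon y hy
    show (a ⊔ b) ⊔ y = b ⊔ y
    have : a ⊔ (b ⊔ y) = b ⊔ y := sup_eq_right.mpr (this.trans_eq (sup_comm _ _))
    rw [sup_assoc, this]
  have hx : (a ⊔ b) ⊓ x = b ⊓ x := hmem
  calc a ⊓ x ≤ (a ⊔ b) ⊓ x := inf_le_inf_right x le_sup_left
    _ = b ⊓ x := hx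
    _ ≤ b := inf_le_left
end

section
/- Let L be a frame such that every open congruence Δ(x) is an intersection of closed congruences ∇(y). Then every congruence on L whose fitting is trivial is the identity congruence, where the fitting of a congruence C is ⋁{Δ(x) : Δ(x) ⊆ C}; i.e., if Δ(x) ⊆ C implies x = 1 for all x, then C is the diagonal. -/
variable {L : Type*} [Order.Frame L]

lemma frameCong_sup_mem {C : Set (L × L)} (hC : IsFrameCong C) {a b c d : L}
    (h1 : (a, b) ∈ C) (h2 : (c, d) ∈ C) : (a ⊔ c, b ⊔ d) ∈ C := by
  have := hC.2.2.2.2 {(a, b), (c, d)} (by rintro p (rfl | rfl) <;> assumption)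
  simpa [Set.image_pair] using this

theorem stmt_11
    (h : ∀ x : L, ∃ S : Set L, delta x = ⋂ y ∈ S, nabla y) :
    ∀ C : Set (L × L), IsFrameCong C → (∀ x : L, delta x ⊆ C → x = ⊤) →
      C = Set.diagonal L := by
  intro C hC htriv
  -- triviality in terms of (x, ⊤) ∈ C
  have hmemtop : ∀ x : L, (x, ⊤) ∈ C → x = ⊤ := by
    intro x hx
    apply htriv x
    intro p hp
    have h1 : (p.1 ⊓ x, p.1) ∈ C := by
      simpa using hC.2.2.2.1 p.1 p.1 x ⊤ (hC.1 p.1) hx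
    have h2 : (p.2 ⊓ x, p.2) ∈ C := by
      simpa using hC.2.2.2.1 p.2 p.2 x ⊤ (hC.1 p.2) hx
    have hp' : p.1 ⊓ x = p.2 ⊓ x := hp
    have : (p.1, p.2) ∈ C := by
      refine hC.2.2.1 p.1 (p.2 ⊓ x) p.2 ?_ h2
      rw [← hp']
      exact hC.2.1 _ _ h1
    exact this
  have key : ∀ a b : L, (a, b) ∈ C → b ≤ a := by
    intro a b hab
    obtain ⟨S, hS⟩ := h b
    have hmem : (a, ⊤) ∈ delta b := by
      rw [hS]
      refine Set.mem_iInter₂.mpr fun y hy => ?_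
      have hb : (b, ⊤) ∈ delta b := by simp [delta]
      rw [hS] at hb
      have hby : b ⊔ y = ⊤ := by
        simpa [nabla] using Set.mem_iInter₂.mp hb y hy
      have hC1 : (a ⊔ y, ⊤) ∈ C := by
        have := frameCong_sup_mem hC hab (hC.1 y)
        rwa [hby] at this
      have hay : a ⊔ y = ⊤ := hmemtop _ hC1
      show a ⊔ y = ⊤ ⊔ y
      simp [hay]
    have : a ⊓ b = ⊤ ⊓ b := hmem
    exact inf_eq_right.mp (by simpa using this)
  ext p
  constructor
  · intro hp
    exact le_antisymm (key _ _ (hC.2.1 _ _ hp)) (key _ _ hp)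
  · intro hp
    have : p = (p.1, p.2) := rfl
    rw [this, Set.mem_diagonal_iff.mp hp]
    exact hC.1 _
end

section
/- Let L be a frame in which every closed congruence ∇(x) is fitted (a join of open congruences). Then every congruence on L is fitted, i.e., a join of open congruences in the congruence frame A(L). -/
variable {L : Type*} [Order.Frame L]

lemma isFrameCong_univ : IsFrameCong (Set.univ : Set (L × L)) := by
  refine ⟨?_, ?_, ?_, ?_, ?_⟩ <;> intros <;> trivial

lemma subset_congGen (R : Set (L × L)) : R ⊆ congGen R := by
  intro p hp
  intro C hC
  exact hC.2 hp

lemma congGen_le {R C : Set (L × L)} (hC : IsFrameCong C) (hRC : R ⊆ C) :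
    congGen R ⊆ C := fun p hp => hp C ⟨hC, hRC⟩

lemma isFrameCong_congGen (R : Set (L × L)) : IsFrameCong (congGen R) := by
  refine ⟨?_, ?_, ?_, ?_, ?_⟩
  · intro x C hC; exact hC.1.1 x
  · intro x y hxy C hC; exact hC.1.2.1 x y (hxy C hC)
  · intro x y z hxy hyz C hC; exact hC.1.2.2.1 x y z (hxy C hC) (hyz C hC)
  · intro x₁ y₁ x₂ y₂ h1 h2 C hC; exact hC.1.2.2.2.1 x₁ y₁ x₂ y₂ (h1 C hC) (h2 C hC)
  · intro s hs C hC
    exact hC.1.2.2.2.2 s (fun p hp => hs hp C hC)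

/-- binary join closure -/
lemma cong_sup {C : Set (L × L)} (hC : IsFrameCong C) {x₁ y₁ x₂ y₂ : L}
    (h1 : (x₁, y₁) ∈ C) (h2 : (x₂, y₂) ∈ C) : (x₁ ⊔ x₂, y₁ ⊔ y₂) ∈ C := by
  have := hC.2.2.2.2 {(x₁, y₁), (x₂, y₂)} (by
    intro p hp; rcases hp with rfl | hp
    · exact h1
    · simp only [Set.mem_singleton_iff] at hp; subst hp; exact h2)
  simpa [Set.image_pair] using this

lemma cong_inf_sup {C : Set (L × L)} (hC : IsFrameCong C) {u v : L}
    (huv : (u, v) ∈ C) : (u ⊓ v, u ⊔ v) ∈ C := by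
  have m : (u ⊓ v, v) ∈ C := by
    have := hC.2.2.2.1 u v v v huv (hC.1 v)
    simpa using this
  have j : (u, u ⊔ v) ∈ C := by
    have := cong_sup hC (hC.1 u) huv
    simpa using this
  exact hC.2.2.1 _ _ _ m (hC.2.2.1 _ _ _ (hC.2.1 _ _ huv) j)

/-- If `(a,b) ∈ C` with `a ≤ b` then `∇(b) ∩ Δ(a) ⊆ C`. -/
lemma nabla_inter_delta_subset {C : Set (L × L)} (hC : IsFrameCong C) {a b : L}
    (hab : a ≤ b) (habC : (a, b) ∈ C) : nabla b ∩ delta a ⊆ C := by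
  rintro ⟨p, q⟩ ⟨hpb, hpa⟩
  simp only [nabla, delta, Set.mem_setOf_eq] at hpb hpa
  have c1 : (p ⊓ a, p ⊓ b) ∈ C := hC.2.2.2.1 p p a b (hC.1 p) habC
  have c2 : (q ⊓ a, q ⊓ b) ∈ C := hC.2.2.2.1 q q a b (hC.1 q) habC
  have c3 : (p ⊓ b, q ⊓ b) ∈ C := by
    refine hC.2.2.1 _ _ _ (hC.2.1 _ _ c1) ?_
    rw [hpa]; exact c2
  have c4 : ((p ⊓ b) ⊔ (p ⊓ q), (q ⊓ b) ⊔ (p ⊓ q)) ∈ C :=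
    cong_sup hC c3 (hC.1 (p ⊓ q))
  have e1 : (p ⊓ b) ⊔ (p ⊓ q) = p := by
    rw [← inf_sup_left]
    exact inf_eq_left.2 (le_trans le_sup_left (le_of_eq (by rw [hpb, sup_comm])))
  have e2 : (q ⊓ b) ⊔ (p ⊓ q) = q := by
    rw [inf_comm p q, ← inf_sup_left]
    exact inf_eq_left.2 (le_trans le_sup_left (le_of_eq (by rw [hpb.symm, sup_comm])))
  rwa [e1, e2] at c4

lemma sSup_image_sup {F : Set L} (a : L) :
    sSup ((fun x => x ⊔ a) '' F ∪ {a}) = sSup F ⊔ a := by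
  apply le_antisymm
  · apply sSup_le
    rintro x (⟨y, hy, rfl⟩ | hx)
    · exact sup_le_sup_right (le_sSup hy) a
    · simp only [Set.mem_singleton_iff] at hx; subst hx; exact le_sup_right
  · apply sup_le
    · apply sSup_le
      intro x hx
      exact le_trans le_sup_left
        (le_sSup (Set.mem_union_left _ ⟨x, hx, rfl⟩))
    · exact le_sSup (Set.mem_union_right _ rfl)

/-- `{(p,q) | (p ⊔ a, q ⊔ a) ∈ Θ}` is a frame congruence when `Θ` is. -/
lemma isFrameCong_supPull {Θ : Set (L × L)} (hΘ : IsFrameCong Θ) (a : L) :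
    IsFrameCong {pq : L × L | (pq.1 ⊔ a, pq.2 ⊔ a) ∈ Θ} := by
  refine ⟨?_, ?_, ?_, ?_, ?_⟩
  · intro x; exact hΘ.1 _
  · intro x y hxy; exact hΘ.2.1 _ _ hxy
  · intro x y z hxy hyz; exact hΘ.2.2.1 _ _ _ hxy hyz
  · intro x₁ y₁ x₂ y₂ h1 h2
    have := hΘ.2.2.2.1 _ _ _ _ h1 h2
    simp only [Set.mem_setOf_eq]
    have e : ∀ u v : L, (u ⊔ a) ⊓ (v ⊔ a) = (u ⊓ v) ⊔ a := by
      intro u v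
      rw [sup_comm u a, sup_comm v a, ← sup_inf_left, sup_comm]
    rwa [e, e] at this
  · intro s hs
    simp only [Set.mem_setOf_eq]
    have key := hΘ.2.2.2.2 ((fun pq : L × L => (pq.1 ⊔ a, pq.2 ⊔ a)) '' s ∪ {(a, a)}) (by
      rintro p (⟨q, hq, rfl⟩ | hp)
      · exact hs hq
      · simp only [Set.mem_singleton_iff] at hp; subst hp; exact hΘ.1 a)
    have e1 : Prod.fst '' ((fun pq : L × L => (pq.1 ⊔ a, pq.2 ⊔ a)) '' s ∪ {(a, a)})
        = (fun x => x ⊔ a) '' (Prod.fst '' s) ∪ {a} := by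
      rw [Set.image_union, Set.image_singleton, Set.image_image, Set.image_image]
    have e2 : Prod.snd '' ((fun pq : L × L => (pq.1 ⊔ a, pq.2 ⊔ a)) '' s ∪ {(a, a)})
        = (fun x => x ⊔ a) '' (Prod.snd '' s) ∪ {a} := by
      rw [Set.image_union, Set.image_singleton, Set.image_image, Set.image_image]
    rw [e1, e2, sSup_image_sup, sSup_image_sup] at key
    exact key

theorem stmt_13
    (h : ∀ x : L, ∃ S : Set L, nabla x = congGen (⋃ y ∈ S, delta y)) :
    ∀ C : Set (L × L), IsFrameCong C →
      ∃ S : Set L, C = congGen (⋃ y ∈ S, delta y) := by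
  intro C hC
  set Sb : L → Set L := fun b => (h b).choose with hSb
  have hSbspec : ∀ b : L, nabla b = congGen (⋃ y ∈ Sb b, delta y) := fun b => (h b).choose_spec
  refine ⟨⋃ p ∈ C, {y | ∃ s ∈ Sb (p.1 ⊔ p.2), y = s ⊔ (p.1 ⊓ p.2)}, ?_⟩
  set S : Set L := ⋃ p ∈ C, {y | ∃ s ∈ Sb (p.1 ⊔ p.2), y = s ⊔ (p.1 ⊓ p.2)} with hS
  set Θ : Set (L × L) := congGen (⋃ y ∈ S, delta y) with hΘdef
  have hΘ : IsFrameCong Θ := isFrameCong_congGen _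
  have hdeltaS : ∀ y ∈ S, delta y ⊆ Θ := by
    intro y hy
    refine Set.Subset.trans ?_ (subset_congGen _)
    exact Set.subset_biUnion_of_mem hy
  apply Set.Subset.antisymm
  · -- C ⊆ Θ
    rintro ⟨u, v⟩ huv
    set a := u ⊓ v with ha
    set b := u ⊔ v with hb
    -- each Δ(s ⊔ a) for s ∈ Sb b is a generator of Θ
    have hgen : ∀ s ∈ Sb b, delta (s ⊔ a) ⊆ Θ := by
      intro s hs
      apply hdeltaS
      exact Set.mem_biUnion huv ⟨s, hs, rfl⟩
    -- the pulled-back congruence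
    have hR : IsFrameCong {pq : L × L | (pq.1 ⊔ a, pq.2 ⊔ a) ∈ Θ} :=
      isFrameCong_supPull hΘ a
    have hnab : nabla b ⊆ {pq : L × L | (pq.1 ⊔ a, pq.2 ⊔ a) ∈ Θ} := by
      rw [hSbspec b]
      apply congGen_le hR
      intro p hp
      simp only [Set.mem_iUnion] at hp
      obtain ⟨s, hs, hps⟩ := hp
      simp only [delta, Set.mem_setOf_eq] at hps
      simp only [Set.mem_setOf_eq]
      apply hgen s hs
      simp only [delta, Set.mem_setOf_eq]
      have e : ∀ w : L, (w ⊔ a) ⊓ (s ⊔ a) = (w ⊓ s) ⊔ a := by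
        intro w
        rw [sup_comm w a, sup_comm s a, ← sup_inf_left, sup_comm, inf_comm]
      rw [e, e, hps]
    have huvb : (u, v) ∈ nabla b := by
      simp only [nabla, Set.mem_setOf_eq, hb]
      rw [← sup_assoc, sup_idem, sup_comm u v, ← sup_assoc, sup_idem, sup_comm]
    have hstep : (u ⊔ a, v ⊔ a) ∈ Θ := hnab huvb
    have hmeet : ((u ⊔ a) ⊓ (u ⊔ v), (v ⊔ a) ⊓ (u ⊔ v)) ∈ Θ :=
      hΘ.2.2.2.1 _ _ _ _ hstep (hΘ.1 (u ⊔ v))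
    have e1 : (u ⊔ a) ⊓ (u ⊔ v) = u := by
      rw [ha, sup_eq_left.2 inf_le_left]
      exact inf_eq_left.2 le_sup_left
    have e2 : (v ⊔ a) ⊓ (u ⊔ v) = v := by
      rw [ha, sup_eq_left.2 inf_le_right]
      exact inf_eq_left.2 le_sup_right
    rwa [e1, e2] at hmeet
  · -- Θ ⊆ C
    apply congGen_le hC
    intro p hp
    simp only [Set.mem_iUnion] at hp
    obtain ⟨y, hy, hpy⟩ := hp
    rw [hS] at hy
    simp only [Set.mem_iUnion, Set.mem_setOf_eq] at hy
    obtain ⟨q, hqC, s, hs, rfl⟩ := hy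
    set a := q.1 ⊓ q.2 with ha
    set b := q.1 ⊔ q.2 with hb
    have habC : (a, b) ∈ C := by
      have : (q.1, q.2) ∈ C := hqC
      exact cong_inf_sup hC this
    refine nabla_inter_delta_subset hC inf_le_sup habC ⟨?_, ?_⟩
    · -- Δ(s ⊔ a) ⊆ ∇ b : via Δ(s ⊔ a) ⊆ Δ s ⊆ ∇ b
      have h1 : p ∈ delta s := by
        simp only [delta, Set.mem_setOf_eq] at hpy ⊢
        have : p.1 ⊓ (s ⊔ a) ⊓ s = p.2 ⊓ (s ⊔ a) ⊓ s := by rw [hpy]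
        rwa [inf_assoc, inf_assoc, inf_eq_right.mpr (le_sup_left : s ≤ s ⊔ a)] at this
      have h2 : delta s ⊆ nabla b := by
        rw [hSbspec b]
        refine Set.Subset.trans ?_ (subset_congGen _)
        exact Set.subset_biUnion_of_mem hs
      exact h2 h1
    · -- Δ(s ⊔ a) ⊆ Δ a
      simp only [delta, Set.mem_setOf_eq] at hpy ⊢
      have : p.1 ⊓ (s ⊔ a) ⊓ a = p.2 ⊓ (s ⊔ a) ⊓ a := by rw [hpy]
      rwa [inf_assoc, inf_assoc, inf_eq_right.mpr (le_sup_right : a ≤ s ⊔ a)] at this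
end
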